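/- Let A ∈ SL₂$ be a Clifford matrix and let M be any 2×2 quaternionic matrix. Then pdet(AM) = pdet(M), where the pseudo-determinant of a 2×2 quaternionic matrix [[p,q],[r,s]] is pdet := p*s − r*q. -/

import Mathlib

open Quaternion

noncomputable section

/-- The involution `q* = a + bi + cj - dk` on quaternions (Clifford reversion). -/
def qstar (q : ℍ[ℝ]) : ℍ[ℝ] := ⟨q.re, q.imI, q.imJ, -q.imK⟩

/-- The involution `q' = a - bi - cj + dk` on quaternions. -/
def qprime (q : ℍ[ℝ]) : ℍ[ℝ] := ⟨q.re, -q.imI, -q.imJ, q.imK⟩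

/-- A paravector is an element of `ℝ + ℝi + ℝj`, i.e. a quaternion with zero `k`-component. -/
def IsParavector (q : ℍ[ℝ]) : Prop := q.imK = 0

/-- The quaternion `k`. -/
def qk : ℍ[ℝ] := ⟨0, 0, 0, 1⟩

/-- A quaternionic spinor: a pair `(ξ, η) ≠ (0,0)` with `ξ * conj η` a paravector. -/
def IsSpinor (κ : ℍ[ℝ] × ℍ[ℝ]) : Prop := κ ≠ 0 ∧ IsParavector (κ.1 * star κ.2)

/-- The bracket `{κ₁, κ₂} = ξ₁* η₂ − η₁* ξ₂`. -/
def bracket (κ₁ κ₂ : ℍ[ℝ] × ℍ[ℝ]) : ℍ[ℝ] := qstar κ₁.1 * κ₂.2 - qstar κ₁.2 * κ₂.1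

/-- Right multiplication `κ x = (ξ x, η x)`. -/
def rmul (κ : ℍ[ℝ] × ℍ[ℝ]) (x : ℍ[ℝ]) : ℍ[ℝ] × ℍ[ℝ] := (κ.1 * x, κ.2 * x)

/-- The complementary pair `κ̌ = (η', −ξ')`. -/
def qcheck (κ : ℍ[ℝ] × ℍ[ℝ]) : ℍ[ℝ] × ℍ[ℝ] := (qprime κ.2, -qprime κ.1)

/-- The real inner product on `ℍ²`: `⟨κ₁, κ₂⟩ = Re (ξ₁ ξ̄₂ + η₁ η̄₂)`. -/
def qinner (κ₁ κ₂ : ℍ[ℝ] × ℍ[ℝ]) : ℝ := (κ₁.1 * star κ₂.1 + κ₁.2 * star κ₂.2).re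

/-- The squared norm `|κ|² = |ξ|² + |η|²` on `ℍ²`. -/
def qnsq (κ : ℍ[ℝ] × ℍ[ℝ]) : ℝ := Quaternion.normSq κ.1 + Quaternion.normSq κ.2

/-- The pseudo-determinant of a 2×2 quaternionic matrix: `pdet [[a,b],[c,d]] = a* d − c* b`. -/
def pdet (A : Matrix (Fin 2) (Fin 2) ℍ[ℝ]) : ℍ[ℝ] := qstar (A 0 0) * A 1 1 - qstar (A 1 0) * A 0 1

/-- A Clifford matrix: columns are quaternionic spinors and the pseudo-determinant is 1. -/
def IsClifford (A : Matrix (Fin 2) (Fin 2) ℍ[ℝ]) : Prop :=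
  IsSpinor (A 0 0, A 1 0) ∧ IsSpinor (A 0 1, A 1 1) ∧ pdet A = 1

/-- Matrix-vector action of a 2×2 quaternionic matrix on a column vector in `ℍ²`. -/
def mact (A : Matrix (Fin 2) (Fin 2) ℍ[ℝ]) (κ : ℍ[ℝ] × ℍ[ℝ]) : ℍ[ℝ] × ℍ[ℝ] :=
  (A 0 0 * κ.1 + A 0 1 * κ.2, A 1 0 * κ.1 + A 1 1 * κ.2)

/-!
Read columnwise, `pdet M` is the bracket `{κ₁, κ₂}` of the columns of `M`, and the columns of
`A * M` are `A κ₁, A κ₂`. Expanding `{A κ₁, A κ₂}` gives a combination of the self-brackets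
`{a, a}, {b, b}` of the columns of `A`, of `pdet A` and of its reversion `(pdet A)*`. A pair
satisfies the spinor condition exactly when its self-bracket vanishes, and `pdet A = 1`, so only
`{κ₁, κ₂}` survives.
-/

@[simp] lemma qstar_re (q : ℍ[ℝ]) : (qstar q).re = q.re := rfl
@[simp] lemma qstar_imI (q : ℍ[ℝ]) : (qstar q).imI = q.imI := rfl
@[simp] lemma qstar_imJ (q : ℍ[ℝ]) : (qstar q).imJ = q.imJ := rfl
@[simp] lemma qstar_imK (q : ℍ[ℝ]) : (qstar q).imK = -q.imK := rfl

@[simp] lemma qstar_qstar (x : ℍ[ℝ]) : qstar (qstar x) = x := by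
  ext <;> simp

@[simp] lemma qstar_one : qstar (1 : ℍ[ℝ]) = 1 := by
  ext <;> simp

@[simp] lemma qstar_add (x y : ℍ[ℝ]) : qstar (x + y) = qstar x + qstar y := by
  ext <;> simp [add_comm]

@[simp] lemma qstar_sub (x y : ℍ[ℝ]) : qstar (x - y) = qstar x - qstar y := by
  ext <;> simp [sub_eq_add_neg, add_comm]

@[simp] lemma qstar_mul (x y : ℍ[ℝ]) : qstar (x * y) = qstar y * qstar x := by
  ext <;> simp [re_mul, imI_mul, imJ_mul, imK_mul] <;> ring

lemma imK_qstar_mul (x y : ℍ[ℝ]) : (qstar x * y).imK = -(x * star y).imK := by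
  simp only [imK_mul, qstar_re, qstar_imI, qstar_imJ, qstar_imK, re_star, imI_star, imJ_star,
    imK_star]
  ring

lemma sub_qstar_eq_zero_iff (z : ℍ[ℝ]) : z - qstar z = 0 ↔ z.imK = 0 := by
  simp [Quaternion.ext_iff]

lemma bracket_self_eq_zero_iff (κ : ℍ[ℝ] × ℍ[ℝ]) :
    bracket κ κ = 0 ↔ IsParavector (κ.1 * star κ.2) := by
  have : bracket κ κ = qstar κ.1 * κ.2 - qstar (qstar κ.1 * κ.2) := by
    simp [bracket]
  rw [this, sub_qstar_eq_zero_iff, imK_qstar_mul, neg_eq_zero, IsParavector]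

lemma pdet_eq_bracket (M : Matrix (Fin 2) (Fin 2) ℍ[ℝ]) :
    pdet M = bracket (M 0 0, M 1 0) (M 0 1, M 1 1) := rfl

lemma mact_col_eq_col_mul (A M : Matrix (Fin 2) (Fin 2) ℍ[ℝ]) (j : Fin 2) :
    mact A (M 0 j, M 1 j) = ((A * M) 0 j, (A * M) 1 j) := by
  simp [mact, Matrix.mul_apply, Fin.sum_univ_two]

lemma bracket_mact (A : Matrix (Fin 2) (Fin 2) ℍ[ℝ]) (κ₁ κ₂ : ℍ[ℝ] × ℍ[ℝ]) :
    bracket (mact A κ₁) (mact A κ₂) =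
      qstar κ₁.1 * bracket (A 0 0, A 1 0) (A 0 0, A 1 0) * κ₂.1
        + qstar κ₁.1 * pdet A * κ₂.2 - qstar κ₁.2 * qstar (pdet A) * κ₂.1
        + qstar κ₁.2 * bracket (A 0 1, A 1 1) (A 0 1, A 1 1) * κ₂.2 := by
  simp only [bracket, mact, pdet, qstar_add, qstar_sub, qstar_mul, qstar_qstar]
  noncomm_ring

/-- The pseudo-determinant is preserved by left multiplication by a Clifford matrix:
`pdet (A M) = pdet M`. -/
theorem pdet_mul_clifford (A M : Matrix (Fin 2) (Fin 2) ℍ[ℝ]) (hA : IsClifford A) :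
    pdet (A * M) = pdet M := by
  obtain ⟨⟨-, h₀⟩, ⟨-, h₁⟩, hdet⟩ := hA
  rw [pdet_eq_bracket, pdet_eq_bracket M, ← mact_col_eq_col_mul, ← mact_col_eq_col_mul,
    bracket_mact, (bracket_self_eq_zero_iff _).2 h₀, (bracket_self_eq_zero_iff _).2 h₁, hdet, qstar_one]
  simp only [bracket, mul_zero, zero_mul, mul_one, add_zero, zero_add]
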